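/- arXiv:2509.12500 — 2 statements merged into one kernel-verified Lean document; each statement's English description precedes it below -/
import Mathlib

section
/- Let U ⊆ ℝ² be open, μ > 0, and let u, v, p : U → ℝ be smooth functions satisfying μΔu = ∂p/∂x, μΔv = ∂p/∂y and ∂u/∂x + ∂v/∂y = 0 on U. Then the vorticity ζ = ∂u/∂y − ∂v/∂x satisfies the Cauchy–Riemann-type identities μ ∂ζ/∂y = ∂p/∂x and μ ∂ζ/∂x = −∂p/∂y everywhere on U. -/
/-- Partial derivative in the x-direction. -/
noncomputable def pdx (f : ℝ × ℝ → ℝ) : ℝ × ℝ → ℝ := fun q => fderiv ℝ f q (1, 0)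

/-- Partial derivative in the y-direction. -/
noncomputable def pdy (f : ℝ × ℝ → ℝ) : ℝ × ℝ → ℝ := fun q => fderiv ℝ f q (0, 1)

/-- The Laplacian Δ = ∂²/∂x² + ∂²/∂y². -/
noncomputable def lap (f : ℝ × ℝ → ℝ) : ℝ × ℝ → ℝ := fun q => pdx (pdx f) q + pdy (pdy f) q

lemma pd_diffAt (f : ℝ × ℝ → ℝ) (q : ℝ × ℝ) (hf : ContDiffAt ℝ (⊤ : ℕ∞) f q) (w : ℝ × ℝ) :
    DifferentiableAt ℝ (fun r => fderiv ℝ f r w) q := by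
  have h1 : ContDiffAt ℝ (⊤ : ℕ∞) (fderiv ℝ f) q := hf.fderiv_right (by simp)
  exact h1.differentiableAt (by simp) |>.clm_apply (differentiableAt_const w)

lemma pd_fderiv (f : ℝ × ℝ → ℝ) (q : ℝ × ℝ) (hf : ContDiffAt ℝ (⊤ : ℕ∞) f q) (w z : ℝ × ℝ) :
    fderiv ℝ (fun r => fderiv ℝ f r w) q z = fderiv ℝ (fderiv ℝ f) q z w := by
  have h1 : DifferentiableAt ℝ (fderiv ℝ f) q :=
    (hf.fderiv_right (m := (⊤ : ℕ∞)) (by simp)).differentiableAt (by simp)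
  rw [fderiv_clm_apply h1 (differentiableAt_const w)]
  simp

lemma pd_symm (f : ℝ × ℝ → ℝ) (q : ℝ × ℝ) (hf : ContDiffAt ℝ (⊤ : ℕ∞) f q) (w z : ℝ × ℝ) :
    fderiv ℝ (fun r => fderiv ℝ f r w) q z = fderiv ℝ (fun r => fderiv ℝ f r z) q w := by
  rw [pd_fderiv f q hf w z, pd_fderiv f q hf z w]
  exact hf.isSymmSndFDerivAt (by rw [minSmoothness_of_isRCLikeNormedField]; exact WithTop.coe_le_coe.mpr le_top) z w

/-- For a Stokes flow (u, v, p) with viscosity μ > 0 on an open set U ⊆ ℝ²,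
the vorticity ζ = ∂u/∂y − ∂v/∂x satisfies the Cauchy–Riemann-type identities
μ ∂ζ/∂y = ∂p/∂x and μ ∂ζ/∂x = −∂p/∂y on U. -/
theorem stmt1 (U : Set (ℝ × ℝ)) (hU : IsOpen U) (μ : ℝ) (hμ : 0 < μ)
    (u v p : ℝ × ℝ → ℝ)
    (hu : ContDiffOn ℝ (⊤ : ℕ∞) u U) (hv : ContDiffOn ℝ (⊤ : ℕ∞) v U) (hp : ContDiffOn ℝ (⊤ : ℕ∞) p U)
    (hstokes1 : ∀ q ∈ U, μ * lap u q = pdx p q)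
    (hstokes2 : ∀ q ∈ U, μ * lap v q = pdy p q)
    (hinc : ∀ q ∈ U, pdx u q + pdy v q = 0) :
    ∀ q ∈ U,
      μ * pdy (fun r => pdy u r - pdx v r) q = pdx p q ∧
      μ * pdx (fun r => pdy u r - pdx v r) q = -pdy p q := by
  intro q hq
  have hqn : U ∈ nhds q := hU.mem_nhds hq
  have hua : ContDiffAt ℝ (⊤ : ℕ∞) u q := hu.contDiffAt hqn
  have hva : ContDiffAt ℝ (⊤ : ℕ∞) v q := hv.contDiffAt hqn
  have hduy : DifferentiableAt ℝ (pdy u) q := pd_diffAt u q hua (0, 1)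
  have hdvx : DifferentiableAt ℝ (pdx v) q := pd_diffAt v q hva (1, 0)
  -- derivatives of the difference
  have hsub : ∀ z : ℝ × ℝ, fderiv ℝ (fun r => pdy u r - pdx v r) q z
      = fderiv ℝ (pdy u) q z - fderiv ℝ (pdx v) q z := by
    intro z
    rw [fderiv_fun_sub hduy hdvx]; rfl
  -- v_y = -u_x near q
  have hev1 : pdy v =ᶠ[nhds q] (fun r => -pdx u r) :=
    Filter.eventuallyEq_of_mem hqn (fun r hr => by
      have := hinc r hr; linarith)
  -- u_x = -v_y near q
  have hev2 : pdx u =ᶠ[nhds q] (fun r => -pdy v r) :=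
    Filter.eventuallyEq_of_mem hqn (fun r hr => by
      have := hinc r hr; linarith)
  have hdux : DifferentiableAt ℝ (pdx u) q := pd_diffAt u q hua (1, 0)
  have hdvy : DifferentiableAt ℝ (pdy v) q := pd_diffAt v q hva (0, 1)
  constructor
  · -- μ ζ_y = p_x
    have e1 : pdy (fun r => pdy u r - pdx v r) q
        = pdy (pdy u) q - pdy (pdx v) q := hsub (0, 1)
    have e2 : pdy (pdx v) q = pdx (pdy v) q := pd_symm v q hva (1, 0) (0, 1)
    have e3 : pdx (pdy v) q = -pdx (pdx u) q := by
      have : fderiv ℝ (pdy v) q = fderiv ℝ (fun r => -pdx u r) q := hev1.fderiv_eq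
      show fderiv ℝ (pdy v) q (1, 0) = _
      rw [this, fderiv_fun_neg]
      simp [pdx]
    have := hstokes1 q hq
    unfold lap at this
    rw [e1, e2, e3]
    linarith
  · -- μ ζ_x = -p_y
    have e1 : pdx (fun r => pdy u r - pdx v r) q
        = pdx (pdy u) q - pdx (pdx v) q := hsub (1, 0)
    have e2 : pdx (pdy u) q = pdy (pdx u) q := pd_symm u q hua (0, 1) (1, 0)
    have e3 : pdy (pdx u) q = -pdy (pdy v) q := by
      have : fderiv ℝ (pdx u) q = fderiv ℝ (fun r => -pdy v r) q := hev2.fderiv_eq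
      show fderiv ℝ (pdx u) q (0, 1) = _
      rw [this, fderiv_fun_neg]
      simp [pdy]
    have := hstokes2 q hq
    unfold lap at this
    rw [e1, e2, e3]
    linarith
end

section
/- Let L > 0 and λ ∈ ℂ with λ ≠ 0. Suppose g : ℝ → ℂ is a four-times continuously differentiable function, not identically zero on [−L, L], satisfying g⁗ + 2λ² g″ + λ⁴ g = 0 on [−L, L] together with the no-slip boundary conditions g(L) = g(−L) = 0 and g′(L) = g′(−L) = 0. Then λ satisfies the Papkovich–Fadle eigenvalue relation sin²(2λL) = 4λ²L², i.e., 2λL is a root of sin²(w) − w² = 0. -/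
open Set

/-- Conservation of the bilinear concomitant for two solutions of the ODE. -/
lemma PF_bconst {L : ℝ} (hL : 0 < L) (lam : ℂ) {g : ℝ → ℂ} (hg : ContDiff ℝ 4 g)
    (hode : ∀ y ∈ Set.Icc (-L) L,
      iteratedDeriv 4 g y + 2 * lam ^ 2 * iteratedDeriv 2 g y + lam ^ 4 * g y = 0)
    (p0 p1 p2 p3 p4 : ℝ → ℂ)
    (h0 : ∀ y, HasDerivAt p0 (p1 y) y) (h1 : ∀ y, HasDerivAt p1 (p2 y) y)
    (h2 : ∀ y, HasDerivAt p2 (p3 y) y) (h3 : ∀ y, HasDerivAt p3 (p4 y) y)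
    (hode2 : ∀ y, p4 y + 2 * lam ^ 2 * p2 y + lam ^ 4 * p0 y = 0) :
    iteratedDeriv 3 g L * p0 L - iteratedDeriv 2 g L * p1 L + iteratedDeriv 1 g L * p2 L
      - g L * p3 L + 2 * lam ^ 2 * (iteratedDeriv 1 g L * p0 L - g L * p1 L)
    = iteratedDeriv 3 g (-L) * p0 (-L) - iteratedDeriv 2 g (-L) * p1 (-L)
      + iteratedDeriv 1 g (-L) * p2 (-L) - g (-L) * p3 (-L)
      + 2 * lam ^ 2 * (iteratedDeriv 1 g (-L) * p0 (-L) - g (-L) * p1 (-L)) := by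
  have hgd : ∀ k : ℕ, k < 4 → ∀ y : ℝ, HasDerivAt (iteratedDeriv k g) (iteratedDeriv (k+1) g y) y := by
    intro k hk y
    rw [iteratedDeriv_succ]
    exact ((hg.differentiable_iteratedDeriv k (by exact_mod_cast hk)) y).hasDerivAt
  have hg0 : ∀ y : ℝ, HasDerivAt g (iteratedDeriv 1 g y) y := by
    intro y
    simpa [iteratedDeriv_one] using ((hg.differentiable (by norm_num)) y).hasDerivAt
  set B : ℝ → ℂ := fun y =>
    iteratedDeriv 3 g y * p0 y - iteratedDeriv 2 g y * p1 y + iteratedDeriv 1 g y * p2 y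
      - g y * p3 y + 2 * lam ^ 2 * (iteratedDeriv 1 g y * p0 y - g y * p1 y) with hB
  have key : ∀ x ∈ Icc (-L) L, B x = B (-L) := by
    apply constant_of_has_deriv_right_zero
    · intro y _
      exact ((((((hgd 3 (by norm_num) y).mul (h0 y)).sub
        ((hgd 2 (by norm_num) y).mul (h1 y))).add
        ((hgd 1 (by norm_num) y).mul (h2 y))).sub
        ((hg0 y).mul (h3 y))).add
        ((((hgd 1 (by norm_num) y).mul (h0 y)).sub
          ((hg0 y).mul (h1 y))).const_mul (2 * lam ^ 2))).continuousAt.continuousWithinAt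
    · intro y hy
      have hy' : y ∈ Icc (-L) L := Ico_subset_Icc_self hy
      have hD : HasDerivAt B ((iteratedDeriv 4 g y * p0 y + iteratedDeriv 3 g y * p1 y)
          - (iteratedDeriv 3 g y * p1 y + iteratedDeriv 2 g y * p2 y)
          + (iteratedDeriv 2 g y * p2 y + iteratedDeriv 1 g y * p3 y)
          - (iteratedDeriv 1 g y * p3 y + g y * p4 y)
          + 2 * lam ^ 2 * ((iteratedDeriv 2 g y * p0 y + iteratedDeriv 1 g y * p1 y)
            - (iteratedDeriv 1 g y * p1 y + g y * p2 y))) y := by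
        exact (((((hgd 3 (by norm_num) y).mul (h0 y)).sub
          ((hgd 2 (by norm_num) y).mul (h1 y))).add
          ((hgd 1 (by norm_num) y).mul (h2 y))).sub
          ((hg0 y).mul (h3 y))).add
          ((((hgd 1 (by norm_num) y).mul (h0 y)).sub
            ((hg0 y).mul (h1 y))).const_mul (2 * lam ^ 2))
      have : ((iteratedDeriv 4 g y * p0 y + iteratedDeriv 3 g y * p1 y)
          - (iteratedDeriv 3 g y * p1 y + iteratedDeriv 2 g y * p2 y)
          + (iteratedDeriv 2 g y * p2 y + iteratedDeriv 1 g y * p3 y)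
          - (iteratedDeriv 1 g y * p3 y + g y * p4 y)
          + 2 * lam ^ 2 * ((iteratedDeriv 2 g y * p0 y + iteratedDeriv 1 g y * p1 y)
            - (iteratedDeriv 1 g y * p1 y + g y * p2 y))) = 0 := by
        linear_combination p0 y * (hode y hy') - g y * (hode2 y)
      rw [this] at hD
      exact hD.hasDerivWithinAt
  exact key L (by constructor <;> linarith)
open Set

section helpers
variable (lam : ℂ)

lemma PF_hasDerivAt_cos (y : ℝ) :
    HasDerivAt (fun y : ℝ => Complex.cos (lam * y)) (-lam * Complex.sin (lam * y)) y := by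
  have h : HasDerivAt (fun z : ℂ => Complex.cos (lam * z)) (-lam * Complex.sin (lam * y)) (y : ℂ) := by
    have := (Complex.hasDerivAt_cos (lam * y)).comp (y : ℂ)
      ((hasDerivAt_id (y : ℂ)).const_mul lam)
    exact (this).congr_deriv (by ring)
  exact h.comp_ofReal

lemma PF_hasDerivAt_sin (y : ℝ) :
    HasDerivAt (fun y : ℝ => Complex.sin (lam * y)) (lam * Complex.cos (lam * y)) y := by
  have h : HasDerivAt (fun z : ℂ => Complex.sin (lam * z)) (lam * Complex.cos (lam * y)) (y : ℂ) := by
    have := (Complex.hasDerivAt_sin (lam * y)).comp (y : ℂ)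
      ((hasDerivAt_id (y : ℂ)).const_mul lam)
    exact (this).congr_deriv (by ring)
  exact h.comp_ofReal

lemma PF_hasDerivAt_ofReal (y : ℝ) : HasDerivAt (fun y : ℝ => (y : ℂ)) 1 y :=
  (hasDerivAt_id (y : ℂ)).comp_ofReal

end helpers

/-- Papkovich–Fadle eigenvalue relation: if g is a nontrivial C⁴ solution of
g⁗ + 2λ²g″ + λ⁴g = 0 on [−L, L] (λ ≠ 0) with clamped (no-slip) boundary
conditions g(±L) = g′(±L) = 0, then sin²(2λL) = 4λ²L². -/
theorem stmt12 (L : ℝ) (hL : 0 < L) (lam : ℂ) (hlam : lam ≠ 0)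
    (g : ℝ → ℂ) (hg : ContDiff ℝ 4 g)
    (hne : ∃ y ∈ Set.Icc (-L) L, g y ≠ 0)
    (hode : ∀ y ∈ Set.Icc (-L) L,
      iteratedDeriv 4 g y + 2 * lam ^ 2 * iteratedDeriv 2 g y + lam ^ 4 * g y = 0)
    (hbc1 : g L = 0) (hbc2 : g (-L) = 0)
    (hbc3 : deriv g L = 0) (hbc4 : deriv g (-L) = 0) :
    Complex.sin (2 * lam * (L : ℂ)) ^ 2 = 4 * lam ^ 2 * (L : ℂ) ^ 2 := by
  have E1 := PF_bconst hL lam hg hode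
    (fun y => Complex.cos (lam * y)) (fun y => -lam * Complex.sin (lam * y))
    (fun y => -lam ^ 2 * Complex.cos (lam * y)) (fun y => lam ^ 3 * Complex.sin (lam * y))
    (fun y => lam ^ 4 * Complex.cos (lam * y))
    (fun y => PF_hasDerivAt_cos lam y)
    (fun y => by exact ((PF_hasDerivAt_sin lam y).const_mul (-lam)).congr_deriv (by ring))
    (fun y => by exact ((PF_hasDerivAt_cos lam y).const_mul (-lam ^ 2)).congr_deriv (by ring))
    (fun y => by exact ((PF_hasDerivAt_sin lam y).const_mul (lam ^ 3)).congr_deriv (by ring))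
    (fun y => by ring)
  have E2 := PF_bconst hL lam hg hode
    (fun y => Complex.sin (lam * y)) (fun y => lam * Complex.cos (lam * y))
    (fun y => -lam ^ 2 * Complex.sin (lam * y)) (fun y => -lam ^ 3 * Complex.cos (lam * y))
    (fun y => lam ^ 4 * Complex.sin (lam * y))
    (fun y => PF_hasDerivAt_sin lam y)
    (fun y => by exact ((PF_hasDerivAt_cos lam y).const_mul lam).congr_deriv (by ring))
    (fun y => by exact ((PF_hasDerivAt_sin lam y).const_mul (-lam ^ 2)).congr_deriv (by ring))
    (fun y => by exact ((PF_hasDerivAt_cos lam y).const_mul (-lam ^ 3)).congr_deriv (by ring))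
    (fun y => by ring)
  have E3 := PF_bconst hL lam hg hode
    (fun y => (y : ℂ) * Complex.cos (lam * y))
    (fun y => Complex.cos (lam * y) - lam * ((y : ℂ) * Complex.sin (lam * y)))
    (fun y => -2 * lam * Complex.sin (lam * y) - lam ^ 2 * ((y : ℂ) * Complex.cos (lam * y)))
    (fun y => -3 * lam ^ 2 * Complex.cos (lam * y) + lam ^ 3 * ((y : ℂ) * Complex.sin (lam * y)))
    (fun y => 4 * lam ^ 3 * Complex.sin (lam * y) + lam ^ 4 * ((y : ℂ) * Complex.cos (lam * y)))
    (fun y => by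
      exact ((PF_hasDerivAt_ofReal y).mul (PF_hasDerivAt_cos lam y)).congr_deriv (by ring))
    (fun y => by
      exact ((PF_hasDerivAt_cos lam y).sub
        (((PF_hasDerivAt_ofReal y).mul (PF_hasDerivAt_sin lam y)).const_mul lam)).congr_deriv (by ring))
    (fun y => by
      exact (((PF_hasDerivAt_sin lam y).const_mul (-2 * lam)).sub
        (((PF_hasDerivAt_ofReal y).mul (PF_hasDerivAt_cos lam y)).const_mul (lam ^ 2))).congr_deriv (by ring))
    (fun y => by
      exact (((PF_hasDerivAt_cos lam y).const_mul (-3 * lam ^ 2)).add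
        (((PF_hasDerivAt_ofReal y).mul (PF_hasDerivAt_sin lam y)).const_mul (lam ^ 3))).congr_deriv (by ring))
    (fun y => by ring)
  have E4 := PF_bconst hL lam hg hode
    (fun y => (y : ℂ) * Complex.sin (lam * y))
    (fun y => Complex.sin (lam * y) + lam * ((y : ℂ) * Complex.cos (lam * y)))
    (fun y => 2 * lam * Complex.cos (lam * y) - lam ^ 2 * ((y : ℂ) * Complex.sin (lam * y)))
    (fun y => -3 * lam ^ 2 * Complex.sin (lam * y) - lam ^ 3 * ((y : ℂ) * Complex.cos (lam * y)))
    (fun y => -4 * lam ^ 3 * Complex.cos (lam * y) + lam ^ 4 * ((y : ℂ) * Complex.sin (lam * y)))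
    (fun y => by
      exact ((PF_hasDerivAt_ofReal y).mul (PF_hasDerivAt_sin lam y)).congr_deriv (by ring))
    (fun y => by
      exact ((PF_hasDerivAt_sin lam y).add
        (((PF_hasDerivAt_ofReal y).mul (PF_hasDerivAt_cos lam y)).const_mul lam)).congr_deriv (by ring))
    (fun y => by
      exact (((PF_hasDerivAt_cos lam y).const_mul (2 * lam)).sub
        (((PF_hasDerivAt_ofReal y).mul (PF_hasDerivAt_sin lam y)).const_mul (lam ^ 2))).congr_deriv (by ring))
    (fun y => by
      exact (((PF_hasDerivAt_sin lam y).const_mul (-3 * lam ^ 2)).sub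
        (((PF_hasDerivAt_ofReal y).mul (PF_hasDerivAt_cos lam y)).const_mul (lam ^ 3))).congr_deriv (by ring))
    (fun y => by ring)
  simp only [iteratedDeriv_one, Complex.ofReal_neg, mul_neg, Complex.cos_neg, Complex.sin_neg,
    hbc1, hbc2, hbc3, hbc4, zero_mul, mul_zero, sub_zero, zero_sub, add_zero, zero_add,
    neg_neg, mul_neg, neg_zero] at E1 E2 E3 E4
  set a := iteratedDeriv 3 g L with ha'
  set b := iteratedDeriv 2 g L with hb'
  set c := iteratedDeriv 3 g (-L) with hc'
  set d := iteratedDeriv 2 g (-L) with hd'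
  set S := Complex.sin (lam * L) with hS'
  set C := Complex.cos (lam * L) with hC'
  have pyth : S ^ 2 + C ^ 2 = 1 := Complex.sin_sq_add_cos_sq _
  have hgoal : Complex.sin (2 * lam * L) = 2 * S * C := by
    rw [show (2 : ℂ) * lam * L = 2 * (lam * L) by ring, Complex.sin_two_mul]
  rw [hgoal]
  by_cases h1 : S * C + lam * L = 0
  · linear_combination (4 * S * C - 4 * lam * (L:ℂ)) * h1
  by_cases h2 : S * C - lam * L = 0
  · linear_combination (4 * S * C + 4 * lam * (L:ℂ)) * h2
  -- derive a = b = c = d = 0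
  have hp : (a - c) * (S * C + lam * (L:ℂ)) = 0 := by
    linear_combination (S + lam * (L:ℂ) * C) * E1 + lam * S * E4 - (a - c) * lam * (L:ℂ) * pyth
  have hq : (b + d) * (S * C + lam * (L:ℂ)) = 0 := by
    linear_combination (L:ℂ) * S * E1 - C * E4 - (b + d) * lam * (L:ℂ) * pyth
  have hr : (a + c) * (S * C - lam * (L:ℂ)) = 0 := by
    linear_combination (C - lam * (L:ℂ) * S) * E2 - lam * C * E3 + (a + c) * lam * (L:ℂ) * pyth
  have hs : (b - d) * (S * C - lam * (L:ℂ)) = 0 := by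
    linear_combination (L:ℂ) * C * E2 - S * E3 + (b - d) * lam * (L:ℂ) * pyth
  have hac1 : a - c = 0 := (mul_eq_zero.1 hp).resolve_right h1
  have hbd1 : b + d = 0 := (mul_eq_zero.1 hq).resolve_right h1
  have hac2 : a + c = 0 := (mul_eq_zero.1 hr).resolve_right h2
  have hbd2 : b - d = 0 := (mul_eq_zero.1 hs).resolve_right h2
  have ha0 : a = 0 := by linear_combination (hac1 + hac2) / 2
  have hc0 : c = 0 := by linear_combination (hac2 - hac1) / 2
  have hb0 : b = 0 := by linear_combination (hbd1 + hbd2) / 2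
  have hd0 : d = 0 := by linear_combination (hbd1 - hbd2) / 2
  -- ODE uniqueness: g vanishes identically on [-L, L]
  exfalso
  have hgd : ∀ k : ℕ, k < 4 → ∀ y : ℝ,
      HasDerivAt (iteratedDeriv k g) (iteratedDeriv (k+1) g y) y := by
    intro k hk y
    rw [iteratedDeriv_succ]
    exact ((hg.differentiable_iteratedDeriv k (by exact_mod_cast hk)) y).hasDerivAt
  set E := ℂ × (ℂ × (ℂ × ℂ)) with hE
  let π0 : E →L[ℂ] ℂ := ContinuousLinearMap.fst ℂ ℂ (ℂ × ℂ × ℂ)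
  let σ : E →L[ℂ] (ℂ × ℂ × ℂ) := ContinuousLinearMap.snd ℂ ℂ (ℂ × ℂ × ℂ)
  let π1 : E →L[ℂ] ℂ := (ContinuousLinearMap.fst ℂ ℂ (ℂ × ℂ)).comp σ
  let π2 : E →L[ℂ] ℂ :=
    (ContinuousLinearMap.fst ℂ ℂ ℂ).comp ((ContinuousLinearMap.snd ℂ ℂ (ℂ × ℂ)).comp σ)
  let π3 : E →L[ℂ] ℂ :=
    (ContinuousLinearMap.snd ℂ ℂ ℂ).comp ((ContinuousLinearMap.snd ℂ ℂ (ℂ × ℂ)).comp σ)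
  let A : E →L[ℂ] E := π1.prod (π2.prod (π3.prod ((-(2 * lam ^ 2)) • π2 + (-(lam ^ 4)) • π0)))
  have hA : ∀ x : E, A x = (x.2.1, x.2.2.1, x.2.2.2,
      -(2 * lam ^ 2) * x.2.2.1 + (-(lam ^ 4)) * x.1) := fun x => rfl
  let f : ℝ → E := fun t => (g t, iteratedDeriv 1 g t, iteratedDeriv 2 g t, iteratedDeriv 3 g t)
  have hf' : ∀ t ∈ Icc (-L) L, HasDerivAt f (A (f t)) t := by
    intro t ht
    have h4 : iteratedDeriv 4 g t = -(2 * lam ^ 2) * iteratedDeriv 2 g t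
        + (-(lam ^ 4)) * g t := by linear_combination hode t ht
    have hd0' : HasDerivAt g (iteratedDeriv 1 g t) t := by
      simpa [iteratedDeriv_one] using ((hg.differentiable (by norm_num)) t).hasDerivAt
    have := hd0'.prodMk ((hgd 1 (by norm_num) t).prodMk
      ((hgd 2 (by norm_num) t).prodMk (hgd 3 (by norm_num) t)))
    rw [hA]
    show HasDerivAt f (iteratedDeriv 1 g t, iteratedDeriv 2 g t, iteratedDeriv 3 g t,
      -(2 * lam ^ 2) * iteratedDeriv 2 g t + (-(lam ^ 4)) * g t) t
    rw [show -(2 * lam ^ 2) * iteratedDeriv 2 g t + (-(lam ^ 4)) * g t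
      = iteratedDeriv 4 g t from by linear_combination -(hode t ht)]
    exact this
  have hfc : Continuous f := by
    refine (hg.continuous).prodMk (.prodMk ?_ (.prodMk ?_ ?_)) <;>
      exact hg.continuous_iteratedDeriv _ (by norm_num)
  have huniq : Set.EqOn f (fun _ => (0 : E)) (Icc (-L) L) := by
    apply ODE_solution_unique (v := fun _ x => A x) (K := ‖A‖₊) (fun _ => A.lipschitz)
      hfc.continuousOn
      (fun t htt => (hf' t (Ico_subset_Icc_self htt)).hasDerivWithinAt)
      continuousOn_const
      (fun t _ => by simpa using (hasDerivAt_const t (0 : E)).hasDerivWithinAt)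
    have e1 : iteratedDeriv 1 g (-L) = 0 := by rw [iteratedDeriv_one]; exact hbc4
    show (g (-L), iteratedDeriv 1 g (-L), iteratedDeriv 2 g (-L), iteratedDeriv 3 g (-L))
      = ((0 : ℂ), (0 : ℂ), (0 : ℂ), (0 : ℂ))
    rw [hbc2, e1, ← hd', ← hc', hd0, hc0]
  obtain ⟨y, hy, hgy⟩ := hne
  exact hgy (congrArg Prod.fst (huniq hy))
end
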